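/- For every ρ > 0, the normalized width of the Berger sphere (S³, g_ρ) is given by W(S³,g_ρ)/vol(S³,g_ρ)^{2/3} = (2/π)^{1/3} ∫₀^π sin(s) √((1 − sin²(s)) ρ^{−4/3} + sin²(s) ρ^{2/3}) ds. Define F(ρ) to be this expression. Then F has a strict local minimum at ρ = 1, and F(ρ) → ∞ as ρ → ∞ and as ρ → 0⁺; in particular F is not bounded above on (0, √2). -/

import Mathlib

open Filter Topology Real intervalIntegral Set

/-!
Substituting `t = cos s` turns the integral into
`I(a, b) = ∫_{-1}^{1} √(t² a + (1 - t²) b) dt`, evaluated at `a = u⁻², b = u` with `u = ρ^(2/3)`.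
Bounding the square root from below by `(1 - t²) √b`, by `t² √a`, and by `(3x - x²)/2`
(which agrees with `√x` to first order at `x = 1`) leaves integrals of even quartics.
The first two bounds give `I ≥ (4/3) √u` and `I ≥ (2/3) u⁻¹`, hence divergence at `∞` and at `0`;
the third gives `I(u⁻², u) - 2 ≥ (u - 1)² q(u) / (15 u⁴)` with `q(1) = 3 > 0`,
hence the strict minimum at `u = 1`, where `I(1, 1) = 2`.
-/

lemma integral_sin_mul_comp_cos {g : ℝ → ℝ} (hg : Continuous g) :
    ∫ s in (0 : ℝ)..π, sin s * g (cos s) = ∫ t in (-1 : ℝ)..1, g t := by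
  have h := integral_comp_mul_deriv (a := 0) (b := π) (fun x _ => hasDerivAt_cos x)
    (by fun_prop) hg
  simp only [Function.comp_def, cos_zero, cos_pi, mul_neg, integral_neg] at h
  rw [integral_symm 1 (-1), ← h, neg_neg]
  simp only [mul_comm]

lemma integral_even_quartic (c₀ c₁ c₂ : ℝ) :
    ∫ t in (-1 : ℝ)..1, (c₀ + c₁ * t ^ 2 + c₂ * t ^ 4) = 2 * c₀ + 2 * c₁ / 3 + 2 * c₂ / 5 := by
  have hint {f : ℝ → ℝ} (hf : Continuous f) : IntervalIntegrable f MeasureTheory.volume (-1) 1 :=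
    hf.intervalIntegrable _ _
  rw [integral_add (hint (by fun_prop)) (hint (by fun_prop)),
    integral_add (hint (by fun_prop)) (hint (by fun_prop))]
  simp only [integral_const, integral_const_mul, integral_pow]
  norm_num
  ring

lemma mul_sqrt_le_sqrt_mul {c x : ℝ} (hc₀ : 0 ≤ c) (hc₁ : c ≤ 1) (hx : 0 ≤ x) :
    c * √x ≤ √(c * x) := by
  rw [← sqrt_sq hc₀, ← sqrt_mul (sq_nonneg c), sqrt_sq hc₀]
  exact sqrt_le_sqrt (by nlinarith [mul_nonneg (mul_nonneg hc₀ (sub_nonneg.2 hc₁)) hx])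

lemma sqrt_ge_three_mul_sub_sq_div_two {x : ℝ} (hx : 0 ≤ x) : (3 * x - x ^ 2) / 2 ≤ √x := by
  have h := sq_sqrt hx
  nlinarith [mul_nonneg (mul_nonneg (sqrt_nonneg x) (sq_nonneg (√x - 1)))
    (by positivity : (0 : ℝ) ≤ √x + 2)]

noncomputable def bergerIntegral (a b : ℝ) : ℝ :=
  ∫ t in (-1 : ℝ)..1, √(t ^ 2 * a + (1 - t ^ 2) * b)

lemma integral_sin_mul_sqrt_eq_bergerIntegral (a b : ℝ) :
    ∫ s in (0 : ℝ)..π, sin s * √((1 - sin s ^ 2) * a + sin s ^ 2 * b) = bergerIntegral a b := by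
  simp only [sin_sq, sub_sub_cancel]
  exact integral_sin_mul_comp_cos (g := fun t => √(t ^ 2 * a + (1 - t ^ 2) * b)) (by fun_prop)

lemma bergerIntegral_one_one : bergerIntegral 1 1 = 2 := by
  norm_num [bergerIntegral]

lemma integral_le_bergerIntegral {p : ℝ → ℝ} (hp : Continuous p) {a b : ℝ}
    (h : ∀ t ∈ Icc (-1 : ℝ) 1, p t ≤ √(t ^ 2 * a + (1 - t ^ 2) * b)) :
    ∫ t in (-1 : ℝ)..1, p t ≤ bergerIntegral a b :=
  integral_mono_on (by norm_num) (hp.intervalIntegrable _ _)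
    ((by fun_prop : Continuous fun t : ℝ => √(t ^ 2 * a + (1 - t ^ 2) * b)).intervalIntegrable
      _ _) h

lemma sq_le_one_of_mem_Icc {t : ℝ} (ht : t ∈ Icc (-1 : ℝ) 1) : t ^ 2 ≤ 1 :=
  sq_le_one_iff_abs_le_one t |>.2 (abs_le.2 ht)

lemma quadratic_le_bergerIntegral {a b : ℝ} (ha : 0 ≤ a) (hb : 0 ≤ b) :
    a + 2 * b - a ^ 2 / 5 - 4 * a * b / 15 - 8 * b ^ 2 / 15 ≤ bergerIntegral a b := by
  calc _ = ∫ t in (-1 : ℝ)..1, ((3 * b - b ^ 2) / 2 + (a - b) * (3 - 2 * b) / 2 * t ^ 2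
          + -(a - b) ^ 2 / 2 * t ^ 4) := by rw [integral_even_quartic]; ring
    _ ≤ bergerIntegral a b := by
      refine integral_le_bergerIntegral (by fun_prop) fun t ht => ?_
      have ht2 := sq_le_one_of_mem_Icc ht
      have hx : 0 ≤ t ^ 2 * a + (1 - t ^ 2) * b := by
        have := sub_nonneg.2 ht2
        positivity
      convert sqrt_ge_three_mul_sub_sq_div_two hx using 1
      ring

lemma four_thirds_mul_sqrt_le_bergerIntegral {a b : ℝ} (ha : 0 ≤ a) (hb : 0 ≤ b) :
    4 / 3 * √b ≤ bergerIntegral a b := by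
  calc _ = ∫ t in (-1 : ℝ)..1, (√b + -√b * t ^ 2 + 0 * t ^ 4) := by
          rw [integral_even_quartic]; ring
    _ ≤ bergerIntegral a b := by
      refine integral_le_bergerIntegral (by fun_prop) fun t ht => ?_
      have ht2 := sq_le_one_of_mem_Icc ht
      calc _ = (1 - t ^ 2) * √b := by ring
        _ ≤ √((1 - t ^ 2) * b) := mul_sqrt_le_sqrt_mul (by linarith) (by nlinarith) hb
        _ ≤ _ := sqrt_le_sqrt (le_add_of_nonneg_left (by positivity))

lemma two_thirds_mul_sqrt_le_bergerIntegral {a b : ℝ} (ha : 0 ≤ a) (hb : 0 ≤ b) :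
    2 / 3 * √a ≤ bergerIntegral a b := by
  calc _ = ∫ t in (-1 : ℝ)..1, (0 + √a * t ^ 2 + 0 * t ^ 4) := by
          rw [integral_even_quartic]; ring
    _ ≤ bergerIntegral a b := by
      refine integral_le_bergerIntegral (by fun_prop) fun t ht => ?_
      have ht2 := sq_le_one_of_mem_Icc ht
      calc _ = t ^ 2 * √a := by ring
        _ ≤ √(t ^ 2 * a) := mul_sqrt_le_sqrt_mul (sq_nonneg t) ht2 ha
        _ ≤ _ := sqrt_le_sqrt (le_add_of_nonneg_right (mul_nonneg (by linarith) hb))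

lemma eventually_two_lt_bergerIntegral :
    ∀ᶠ u in 𝓝[≠] (1 : ℝ), 2 < bergerIntegral (u ^ 2)⁻¹ u := by
  set q : ℝ → ℝ := fun u => -8 * u ^ 4 + 14 * u ^ 3 + 6 * u ^ 2 - 6 * u - 3
  have hq : ∀ᶠ u in 𝓝 (1 : ℝ), 0 < q u :=
    ((show Continuous q by fun_prop).tendsto 1).eventually_const_lt (by norm_num [q])
  filter_upwards [nhdsWithin_le_nhds hq, nhdsWithin_le_nhds (lt_mem_nhds one_pos),
    self_mem_nhdsWithin] with u hqu hu hu1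
  have key : (u ^ 2)⁻¹ + 2 * u - ((u ^ 2)⁻¹) ^ 2 / 5 - 4 * (u ^ 2)⁻¹ * u / 15 - 8 * u ^ 2 / 15 - 2
      = (u - 1) ^ 2 * q u / (15 * u ^ 4) := by
    field_simp
    ring
  have hpos : 0 < (u - 1) ^ 2 * q u / (15 * u ^ 4) := by
    have := sub_ne_zero.2 hu1
    exact div_pos (mul_pos (by positivity) hqu) (by positivity)
  linarith [quadratic_le_bergerIntegral (by positivity : 0 ≤ (u ^ 2)⁻¹) hu.le]

lemma tendsto_bergerIntegral_atTop :
    Tendsto (fun u => bergerIntegral (u ^ 2)⁻¹ u) atTop atTop := by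
  refine tendsto_atTop_mono' _ ?_
    (tendsto_sqrt_atTop.const_mul_atTop (by norm_num : (0 : ℝ) < 4 / 3))
  filter_upwards [eventually_ge_atTop 0] with u hu
  exact four_thirds_mul_sqrt_le_bergerIntegral (by positivity) hu

lemma tendsto_bergerIntegral_nhdsGT_zero :
    Tendsto (fun u => bergerIntegral (u ^ 2)⁻¹ u) (𝓝[>] 0) atTop := by
  refine tendsto_atTop_mono' _ ?_
    (tendsto_inv_nhdsGT_zero.const_mul_atTop (by norm_num : (0 : ℝ) < 2 / 3))
  filter_upwards [self_mem_nhdsWithin] with u (hu : 0 < u)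
  calc 2 / 3 * u⁻¹ = 2 / 3 * √(u ^ 2)⁻¹ := by rw [sqrt_inv, sqrt_sq hu.le]
    _ ≤ _ := two_thirds_mul_sqrt_le_bergerIntegral (by positivity) hu.le

noncomputable def bergerWidth (ρ : ℝ) : ℝ :=
  (2 / π) ^ ((1 : ℝ) / 3) *
    ∫ s in (0 : ℝ)..π, sin s *
      √((1 - sin s ^ 2) * ρ ^ (-(4 : ℝ) / 3) + sin s ^ 2 * ρ ^ ((2 : ℝ) / 3))

lemma bergerWidth_eq {ρ : ℝ} (hρ : 0 < ρ) :
    bergerWidth ρ = (2 / π) ^ ((1 : ℝ) / 3) *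
      bergerIntegral ((ρ ^ ((2 : ℝ) / 3)) ^ 2)⁻¹ (ρ ^ ((2 : ℝ) / 3)) := by
  rw [bergerWidth, integral_sin_mul_sqrt_eq_bergerIntegral, ← rpow_natCast, ← rpow_mul hρ.le,
    ← rpow_neg hρ.le]
  norm_num

lemma eventually_bergerWidth_one_lt :
    ∀ᶠ ρ in 𝓝[≠] (1 : ℝ), bergerWidth 1 < bergerWidth ρ := by
  have hpos : ∀ᶠ ρ in 𝓝[≠] (1 : ℝ), 0 < ρ := nhdsWithin_le_nhds (lt_mem_nhds one_pos)
  have hu : Tendsto (fun ρ : ℝ => ρ ^ ((2 : ℝ) / 3)) (𝓝[≠] 1) (𝓝[≠] 1) := by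
    refine tendsto_nhdsWithin_iff.2 ⟨?_, ?_⟩
    · simpa using
        (continuousAt_rpow_const 1 ((2 : ℝ) / 3) (.inl one_ne_zero)).tendsto.mono_left
          nhdsWithin_le_nhds
    · filter_upwards [hpos, self_mem_nhdsWithin] with ρ hρ hρ1 h
      exact hρ1 ((rpow_left_inj hρ.le zero_le_one (by norm_num)).1 (h.trans (one_rpow _).symm))
  filter_upwards [hu.eventually eventually_two_lt_bergerIntegral, hpos] with ρ h hρ
  rw [bergerWidth_eq one_pos, bergerWidth_eq hρ, one_rpow, one_pow, inv_one,
    bergerIntegral_one_one]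
  exact mul_lt_mul_of_pos_left h (by positivity)

lemma tendsto_bergerWidth_atTop : Tendsto bergerWidth atTop atTop := by
  refine ((tendsto_bergerIntegral_atTop.comp
    (tendsto_rpow_atTop (by norm_num : (0 : ℝ) < 2 / 3))).const_mul_atTop
    (by positivity : (0 : ℝ) < (2 / π) ^ ((1 : ℝ) / 3))).congr' ?_
  filter_upwards [eventually_gt_atTop 0] with ρ hρ
  exact (bergerWidth_eq hρ).symm

lemma tendsto_bergerWidth_nhdsGT_zero : Tendsto bergerWidth (𝓝[>] 0) atTop := by
  have hu : Tendsto (fun ρ : ℝ => ρ ^ ((2 : ℝ) / 3)) (𝓝[>] 0) (𝓝[>] 0) := by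
    refine tendsto_nhdsWithin_iff.2 ⟨?_, ?_⟩
    · simpa using
        (continuousAt_rpow_const 0 ((2 : ℝ) / 3) (.inr (by norm_num))).tendsto.mono_left
          nhdsWithin_le_nhds
    · filter_upwards [self_mem_nhdsWithin] with ρ (hρ : 0 < ρ) using rpow_pos_of_pos hρ _
  refine ((tendsto_bergerIntegral_nhdsGT_zero.comp hu).const_mul_atTop
    (by positivity : (0 : ℝ) < (2 / π) ^ ((1 : ℝ) / 3))).congr' ?_
  filter_upwards [self_mem_nhdsWithin] with ρ (hρ : 0 < ρ)
  exact (bergerWidth_eq hρ).symm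

/-- qualitative behaviour of the normalized width
F(ρ) of the Berger spheres: strict local minimum at ρ = 1, divergence as
ρ → 0⁺ and ρ → ∞, hence unboundedness on (0,√2). -/
theorem stmt7 :
    let F : ℝ → ℝ := fun ρ => (2 / π) ^ ((1 : ℝ) / 3) *
      ∫ s in (0 : ℝ)..π, Real.sin s *
        Real.sqrt ((1 - Real.sin s ^ 2) * ρ ^ (-(4 : ℝ) / 3) +
          Real.sin s ^ 2 * ρ ^ ((2 : ℝ) / 3))
    (∃ δ > (0 : ℝ), ∀ ρ ∈ Set.Ioo (1 - δ) (1 + δ), ρ ≠ 1 → F 1 < F ρ) ∧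
    Tendsto F atTop atTop ∧
    Tendsto F (𝓝[>] (0 : ℝ)) atTop ∧
    ¬ BddAbove (F '' Set.Ioo 0 (Real.sqrt 2)) := by
  intro F
  obtain ⟨δ, hδ, hball⟩ :=
    Metric.mem_nhds_iff.1 (eventually_nhdsWithin_iff.1 eventually_bergerWidth_one_lt)
  refine ⟨⟨δ, hδ, fun ρ hρ => hball (by rwa [Real.ball_eq_Ioo])⟩, tendsto_bergerWidth_atTop,
    tendsto_bergerWidth_nhdsGT_zero, not_bddAbove_iff.2 fun M => ?_⟩
  obtain ⟨ρ, hM, hρ⟩ := ((tendsto_bergerWidth_nhdsGT_zero.eventually_gt_atTop M).and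
    (Ioo_mem_nhdsGT (sqrt_pos.2 two_pos))).exists
  exact ⟨F ρ, mem_image_of_mem F hρ, hM⟩
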